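/- Suppose p ≠ 2. Order the four G-orbits on binary quadratic forms as O_1 = {0}, O_2 = orbit of v^2, O_3 = orbit of uv, O_4 = orbit of u^2 − l v^2 (l a non-square), with indicator functions e_i. Then for y ∈ O_i one has q^3 · \hat{e_j}(y) = m_{ij}, where the matrix (m_{ij}) has rows: row 1: [1, q^2−1, q(q^2−1)/2, q(q−1)^2/2]; row 2: [1, −1, (q^2−q)/2, −(q^2−q)/2]; row 3: [1, q−1, −q, 0]; row 4: [1, −(q+1), 0, q]. -/

import Mathlib

/-!
The action multiplies the discriminant `b² - 4ac` by the nonzero square `(t · det g)²`, and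
completing the square shows that every nonzero form is equivalent to `u² - (b² - 4ac) v²`.
So the four orbits are `{0}` and the nonzero forms whose discriminant is zero, a nonzero square,
or a non-square; their indicators are combinations of `1`, `δ₀`, `[disc = 0]` and `χ ∘ disc`,
with `χ` the quadratic character. Since `[x, g · w] = [gᵀ · x, w]`, the Fourier transform of an
invariant function is constant on orbits, so it suffices to evaluate it at `w = (a, 0, c)`
(`uv` is equivalent to `u² - v²`). Summing first over the middle coefficient `b` reduces
everything to the number `1 + χ(ac)` of square roots of `4ac`, to `∑_b χ(b² - 4ac)`, which is a
Jacobi sum, and to products of one-variable Gauss sums, whose square is `χ(-1) q`.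
-/

open scoped Classical
open MvPolynomial Matrix

noncomputable section

/-- The standard additive character `t ↦ exp(2πi·Tr_{F/F_p}(t)/p)` of a finite field `F`
of characteristic `p`. -/
def psiF (p : ℕ) [Fact p.Prime] (F : Type*) [Field F] [Fintype F] [CharP F p] (t : F) : ℂ :=
  letI : Algebra (ZMod p) F := ZMod.algebra F p
  Complex.exp (2 * Real.pi * Complex.I * ((Algebra.trace (ZMod p) F t).val : ℂ) / (p : ℂ))

variable {F : Type*} [Field F] [Fintype F]

/-- The binary quadratic form `a u² + b uv + c v²` attached to `(a,b,c)`. -/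
def toPolyBQ (x : Fin 3 → F) : MvPolynomial (Fin 2) F :=
  C (x 0) * X 0 ^ 2 + C (x 1) * X 0 * X 1 + C (x 2) * X 1 ^ 2

/-- Substitution corresponding to the linear change of variables `(u,v) ↦ (u,v)·g`. -/
def subst2 (g : Matrix (Fin 2) (Fin 2) F) (P : MvPolynomial (Fin 2) F) : MvPolynomial (Fin 2) F :=
  aeval (fun j => ∑ i : Fin 2, C (g i j) * X i) P

/-- `x` lies in the `GL₁(F) × GL₂(F)`-orbit of `r` (binary quadratic forms),
for the action `(g₁,g₂)·x(u,v) = g₁·x((u,v)g₂)`. -/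
def InOrbitBQ (r x : Fin 3 → F) : Prop :=
  ∃ (t : Fˣ) (g : Matrix.GeneralLinearGroup (Fin 2) F),
    C (t : F) * subst2 (g : Matrix (Fin 2) (Fin 2) F) (toPolyBQ r) = toPolyBQ x

/-- The bilinear form `[x,x'] = aa' + bb'/2 + cc'` on binary quadratic forms. -/
def bformBQ (x y : Fin 3 → F) : F := x 0 * y 0 + x 1 * y 1 / 2 + x 2 * y 2

/-- The Fourier transform on the space of binary quadratic forms over `F`. -/
def FTBQ (p : ℕ) [Fact p.Prime] [CharP F p] (Φ : (Fin 3 → F) → ℂ) (y : Fin 3 → F) : ℂ :=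
  ((Fintype.card F : ℂ) ^ 3)⁻¹ * ∑ x : Fin 3 → F, Φ x * psiF p F (bformBQ x y)


namespace BinQuad

section Orbits

variable {K : Type*} [Field K]

/-- The coefficients of `t · x((u,v) g)` (see `C_mul_subst2_toPolyBQ`). -/
def act (t : K) (g : Matrix (Fin 2) (Fin 2) K) (x : Fin 3 → K) : Fin 3 → K :=
  ![t * (x 0 * g 0 0 ^ 2 + x 1 * (g 0 0 * g 0 1) + x 2 * g 0 1 ^ 2),
    t * (2 * (x 0 * (g 0 0 * g 1 0)) + x 1 * (g 0 0 * g 1 1 + g 0 1 * g 1 0)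
      + 2 * (x 2 * (g 0 1 * g 1 1))),
    t * (x 0 * g 1 0 ^ 2 + x 1 * (g 1 0 * g 1 1) + x 2 * g 1 1 ^ 2)]

def disc (x : Fin 3 → K) : K := x 1 ^ 2 - 4 * (x 0 * x 2)

lemma act_act (t s : K) (g h : Matrix (Fin 2) (Fin 2) K) (x : Fin 3 → K) :
    act t g (act s h x) = act (t * s) (g * h) x := by
  funext i
  fin_cases i <;> simp [act, Matrix.mul_apply, Fin.sum_univ_two] <;> ring

lemma act_one (x : Fin 3 → K) : act 1 1 x = x := by
  funext i
  fin_cases i <;> simp [act]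

lemma act_zero (t : K) (g : Matrix (Fin 2) (Fin 2) K) : act t g 0 = 0 := by
  funext i
  fin_cases i <;> simp [act]

lemma disc_act (t : K) (g : Matrix (Fin 2) (Fin 2) K) (x : Fin 3 → K) :
    disc (act t g x) = (t * g.det) ^ 2 * disc x := by
  simp [act, disc, Matrix.det_fin_two]
  ring

lemma act_inv_act {t : K} (ht : t ≠ 0) {g : Matrix (Fin 2) (Fin 2) K} (hg : g.det ≠ 0)
    (x : Fin 3 → K) : act t⁻¹ g⁻¹ (act t g x) = x := by
  rw [act_act, inv_mul_cancel₀ ht, Matrix.nonsing_inv_mul g hg.isUnit, act_one]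

lemma act_act_inv {t : K} (ht : t ≠ 0) {g : Matrix (Fin 2) (Fin 2) K} (hg : g.det ≠ 0)
    (x : Fin 3 → K) : act t g (act t⁻¹ g⁻¹ x) = x := by
  rw [act_act, mul_inv_cancel₀ ht, Matrix.mul_nonsing_inv g hg.isUnit, act_one]

lemma det_inv_ne_zero {g : Matrix (Fin 2) (Fin 2) K} (hg : g.det ≠ 0) : g⁻¹.det ≠ 0 := by
  simpa [Matrix.det_nonsing_inv, Ring.inverse_eq_inv'] using hg

lemma act_bijective {t : K} (ht : t ≠ 0) {g : Matrix (Fin 2) (Fin 2) K} (hg : g.det ≠ 0) :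
    Function.Bijective (act t g) :=
  Function.bijective_iff_has_inverse.mpr ⟨act t⁻¹ g⁻¹, act_inv_act ht hg, act_act_inv ht hg⟩

lemma bformBQ_act (h2 : (2 : K) ≠ 0) (t : K) (g : Matrix (Fin 2) (Fin 2) K) (x w : Fin 3 → K) :
    bformBQ x (act t g w) = bformBQ (act t gᵀ x) w := by
  simp only [bformBQ, act, Matrix.cons_val_zero, Matrix.cons_val_one, Matrix.cons_val_two,
    Matrix.head_cons, Matrix.tail_cons, Matrix.transpose_apply]
  field_simp
  ring

lemma isSquare_sq_mul_iff {s : K} (hs : s ≠ 0) (a : K) : IsSquare (s ^ 2 * a) ↔ IsSquare a := by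
  refine ⟨fun ⟨r, hr⟩ => ⟨r / s, ?_⟩, fun ha => (IsSquare.sq s).mul ha⟩
  field_simp
  linear_combination hr

lemma eval_toPolyBQ (v : Fin 2 → K) (x : Fin 3 → K) :
    eval v (toPolyBQ x) = x 0 * v 0 ^ 2 + x 1 * (v 0 * v 1) + x 2 * v 1 ^ 2 := by
  simp [toPolyBQ]; ring

lemma toPolyBQ_injective : Function.Injective (toPolyBQ (F := K)) := by
  intro x y h
  have e₁ := congrArg (eval ![1, 0]) h
  have e₂ := congrArg (eval ![0, 1]) h
  have e₃ := congrArg (eval ![1, 1]) h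
  simp [eval_toPolyBQ] at e₁ e₂ e₃
  funext i
  fin_cases i
  · exact e₁
  · simpa [e₁, e₂] using e₃
  · exact e₂

lemma C_mul_subst2_toPolyBQ (t : K) (g : Matrix (Fin 2) (Fin 2) K) (x : Fin 3 → K) :
    C t * subst2 g (toPolyBQ x) = toPolyBQ (act t g x) := by
  simp only [subst2, toPolyBQ, map_add, _root_.map_mul, map_pow, aeval_C, aeval_X, act,
    Fin.sum_univ_two, Matrix.cons_val_zero, Matrix.cons_val_one, Matrix.head_cons,
    Matrix.cons_val_two, Matrix.tail_cons, map_ofNat, MvPolynomial.algebraMap_eq]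
  ring

lemma inOrbitBQ_iff (r x : Fin 3 → K) :
    InOrbitBQ r x ↔ ∃ t ≠ 0, ∃ g : Matrix (Fin 2) (Fin 2) K, g.det ≠ 0 ∧ act t g r = x := by
  constructor
  · rintro ⟨t, g, hg⟩
    rw [C_mul_subst2_toPolyBQ] at hg
    exact ⟨t, t.ne_zero, g, (Matrix.isUnit_iff_isUnit_det _ |>.mp g.isUnit).ne_zero,
      toPolyBQ_injective hg⟩
  · rintro ⟨t, ht, g, hg, rfl⟩
    exact ⟨Units.mk0 t ht, Matrix.GeneralLinearGroup.mkOfDetNeZero g hg,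
      C_mul_subst2_toPolyBQ t g r⟩

lemma inOrbitBQ_act {t : K} (ht : t ≠ 0) {g : Matrix (Fin 2) (Fin 2) K} (hg : g.det ≠ 0)
    (x : Fin 3 → K) : InOrbitBQ x (act t g x) :=
  (inOrbitBQ_iff _ _).mpr ⟨t, ht, g, hg, rfl⟩

lemma _root_.InOrbitBQ.symm {x y : Fin 3 → K} (h : InOrbitBQ x y) : InOrbitBQ y x := by
  obtain ⟨t, ht, g, hg, rfl⟩ := (inOrbitBQ_iff _ _).mp h
  have h := inOrbitBQ_act (inv_ne_zero ht) (det_inv_ne_zero hg) (act t g x)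
  rwa [act_inv_act ht hg] at h

lemma _root_.InOrbitBQ.trans {x y z : Fin 3 → K} (hxy : InOrbitBQ x y) (hyz : InOrbitBQ y z) :
    InOrbitBQ x z := by
  obtain ⟨t, ht, g, hg, rfl⟩ := (inOrbitBQ_iff _ _).mp hxy
  obtain ⟨s, hs, h, hh, rfl⟩ := (inOrbitBQ_iff _ _).mp hyz
  rw [act_act]
  exact inOrbitBQ_act (mul_ne_zero hs ht) (by simpa [Matrix.det_mul] using ⟨hh, hg⟩) x

lemma inOrbitBQ_act_iff {t : K} (ht : t ≠ 0) {g : Matrix (Fin 2) (Fin 2) K} (hg : g.det ≠ 0)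
    (r x : Fin 3 → K) : InOrbitBQ r (act t g x) ↔ InOrbitBQ r x :=
  ⟨fun h => h.trans (inOrbitBQ_act ht hg x).symm, fun h => h.trans (inOrbitBQ_act ht hg x)⟩

/-- Completing the square: `x = x₀ ((u + x₁/(2x₀) v)² - disc x · (v/(2x₀))²)` if `x₀ ≠ 0`, and
similarly with `u, v` exchanged, or `x₁ uv = x₁ (U² - x₁² V²)` with `U = (u+v)/2`,
`V = (v-u)/(2x₁)`. -/
lemma inOrbitBQ_one_zero_neg_disc (h2 : (2 : K) ≠ 0) {x : Fin 3 → K} (hx : x ≠ 0) :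
    InOrbitBQ ![1, 0, -disc x] x := by
  rw [inOrbitBQ_iff]
  obtain hx₀ | hx₀ := ne_or_eq (x 0) 0
  · refine ⟨x 0, hx₀, !![1, 0; x 1 / (2 * x 0), 1 / (2 * x 0)], by simp [hx₀, h2], ?_⟩
    funext i
    fin_cases i <;> simp [act, disc] <;> field_simp
    ring
  obtain hx₂ | hx₂ := ne_or_eq (x 2) 0
  · refine ⟨x 2, hx₂, !![x 1 / (2 * x 2), 1 / (2 * x 2); 1, 0], by simp [hx₂, h2], ?_⟩
    funext i
    fin_cases i <;> simp [act, disc, hx₀, hx₂] <;> field_simp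
    ring
  have hx₁ : x 1 ≠ 0 := fun hx₁ => hx (by funext i; fin_cases i <;> simp_all)
  refine ⟨x 1, hx₁, !![1 / 2, -1 / (2 * x 1); 1 / 2, 1 / (2 * x 1)], ?_, ?_⟩
  · simp [Matrix.det_fin_two_of]; field_simp; ring_nf; exact h2
  · funext i; fin_cases i <;> simp [act, disc, hx₀, hx₁, hx₂] <;> (field_simp; ring)

lemma inOrbitBQ_one_zero_neg_sq_mul (e : K) {s : K} (hs : s ≠ 0) :
    InOrbitBQ ![1, 0, -e] ![1, 0, -(s ^ 2 * e)] := by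
  rw [inOrbitBQ_iff]
  refine ⟨1, one_ne_zero, !![1, 0; 0, s], by simpa using hs, ?_⟩
  funext i; fin_cases i <;> simp [act]; ring

lemma disc_eq_sq_mul_of_inOrbitBQ {x y : Fin 3 → K} (h : InOrbitBQ x y) :
    ∃ s ≠ 0, disc y = s ^ 2 * disc x := by
  obtain ⟨t, ht, g, hg, rfl⟩ := (inOrbitBQ_iff _ _).mp h
  exact ⟨t * g.det, mul_ne_zero ht hg, disc_act t g x⟩

lemma ne_zero_of_inOrbitBQ {x y : Fin 3 → K} (h : InOrbitBQ x y) (hx : x ≠ 0) : y ≠ 0 := by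
  obtain ⟨t, ht, g, hg, rfl⟩ := (inOrbitBQ_iff _ _).mp h
  intro hy
  rw [← act_inv_act ht hg x, hy, act_zero] at hx
  exact hx rfl

lemma inOrbitBQ_of_disc_eq_sq_mul (h2 : (2 : K) ≠ 0) {x y : Fin 3 → K} (hx : x ≠ 0)
    (hy : y ≠ 0) {s : K} (hs : s ≠ 0) (h : disc y = s ^ 2 * disc x) : InOrbitBQ x y :=
  (inOrbitBQ_one_zero_neg_disc h2 hx).symm.trans <|
    (inOrbitBQ_one_zero_neg_sq_mul (disc x) hs).trans (h ▸ inOrbitBQ_one_zero_neg_disc h2 hy)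

lemma inOrbitBQ_zero_iff (x : Fin 3 → K) : InOrbitBQ ![0, 0, 0] x ↔ x = 0 := by
  rw [show (![0, 0, 0] : Fin 3 → K) = 0 by simp, inOrbitBQ_iff]
  constructor
  · rintro ⟨t, -, g, -, rfl⟩
    exact act_zero t g
  · rintro rfl
    exact ⟨1, one_ne_zero, 1, by simp, act_zero 1 1⟩

lemma inOrbitBQ_vSq_iff (h2 : (2 : K) ≠ 0) (x : Fin 3 → K) :
    InOrbitBQ ![0, 0, 1] x ↔ x ≠ 0 ∧ disc x = 0 := by
  have hr : (![0, 0, 1] : Fin 3 → K) ≠ 0 := fun h => by simpa using congrFun h 2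
  have hd : disc (![0, 0, 1] : Fin 3 → K) = 0 := by simp [disc]
  constructor
  · intro h
    obtain ⟨s, -, hs⟩ := disc_eq_sq_mul_of_inOrbitBQ h
    exact ⟨ne_zero_of_inOrbitBQ h hr, by rw [hs, hd, mul_zero]⟩
  · rintro ⟨hx, hdx⟩
    exact inOrbitBQ_of_disc_eq_sq_mul h2 hr hx one_ne_zero (by rw [hdx, hd, mul_zero])

lemma inOrbitBQ_uv_iff (h2 : (2 : K) ≠ 0) (x : Fin 3 → K) :
    InOrbitBQ ![0, 1, 0] x ↔ disc x ≠ 0 ∧ IsSquare (disc x) := by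
  have hr : (![0, 1, 0] : Fin 3 → K) ≠ 0 := fun h => by simpa using congrFun h 1
  have hd : disc (![0, 1, 0] : Fin 3 → K) = 1 := by simp [disc]
  constructor
  · intro h
    obtain ⟨s, hs, hds⟩ := disc_eq_sq_mul_of_inOrbitBQ h
    rw [hds, hd, mul_one]
    exact ⟨pow_ne_zero 2 hs, IsSquare.sq s⟩
  · rintro ⟨hdx, s, hs⟩
    have hx : x ≠ 0 := by rintro rfl; simp [disc] at hdx
    refine inOrbitBQ_of_disc_eq_sq_mul h2 hr hx (s := s) ?_ (by rw [hs, hd]; ring)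
    rintro rfl; simp [hs] at hdx

def IsInvariant {α : Type*} (Φ : (Fin 3 → K) → α) : Prop :=
  ∀ ⦃t : K⦄, t ≠ 0 → ∀ ⦃g : Matrix (Fin 2) (Fin 2) K⦄, g.det ≠ 0 → ∀ x, Φ (act t g x) = Φ x

def orbitIndicator (r : Fin 3 → K) : (Fin 3 → K) → ℂ := fun x => if InOrbitBQ r x then 1 else 0

def indDiscZero : (Fin 3 → K) → ℂ := fun x => if disc x = 0 then 1 else 0

lemma isInvariant_one : IsInvariant (1 : (Fin 3 → K) → ℂ) := fun _ _ _ _ _ => rfl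

lemma isInvariant_orbitIndicator (r : Fin 3 → K) :
    IsInvariant (orbitIndicator r) := fun _ ht _ hg x => by
  simp only [orbitIndicator, inOrbitBQ_act_iff ht hg]

lemma isInvariant_indDiscZero : IsInvariant (indDiscZero (K := K)) := fun t ht g hg x => by
  simp [indDiscZero, disc_act, ht, hg]

lemma orbitIndicator_zero :
    orbitIndicator (![0, 0, 0] : Fin 3 → K) = Pi.single 0 1 := by
  funext x
  simp [orbitIndicator, inOrbitBQ_zero_iff, Pi.single_apply]

lemma orbitIndicator_vSq (h2 : (2 : K) ≠ 0) :
    orbitIndicator (![0, 0, 1] : Fin 3 → K) = indDiscZero - Pi.single 0 1 := by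
  funext x
  rcases eq_or_ne x 0 with rfl | hx
  · simp [orbitIndicator, inOrbitBQ_vSq_iff h2, indDiscZero, disc]
  · simp [orbitIndicator, inOrbitBQ_vSq_iff h2, indDiscZero, hx]

end Orbits

local notation "qC" => (Fintype.card F : ℂ)

lemma isSquare_mul_of_not_isSquare {a b : F} (ha : ¬IsSquare a) (hb : ¬IsSquare b) :
    IsSquare (a * b) := by
  have ha0 : a ≠ 0 := by rintro rfl; exact ha IsSquare.zero
  have hb0 : b ≠ 0 := by rintro rfl; exact hb IsSquare.zero
  rw [← quadraticChar_one_iff_isSquare (mul_ne_zero ha0 hb0), _root_.map_mul,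
    quadraticChar_neg_one_iff_not_isSquare.mpr ha, quadraticChar_neg_one_iff_not_isSquare.mpr hb]
  rfl

lemma inOrbitBQ_nonsplit_iff (h2 : (2 : F) ≠ 0) {l : F} (hl : ¬IsSquare l) (x : Fin 3 → F) :
    InOrbitBQ ![1, 0, -l] x ↔ ¬IsSquare (disc x) := by
  have hr : (![1, 0, -l] : Fin 3 → F) ≠ 0 := fun h => by simpa using congrFun h 0
  have hd : disc (![1, 0, -l] : Fin 3 → F) = 2 ^ 2 * l := by simp [disc]; norm_num
  have hd' : ¬IsSquare (disc ![1, 0, -l]) := by rwa [hd, isSquare_sq_mul_iff h2]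
  constructor
  · intro h
    obtain ⟨s, hs, hds⟩ := disc_eq_sq_mul_of_inOrbitBQ h
    rwa [hds, isSquare_sq_mul_iff hs]
  · intro hdx
    have hdx0 : disc x ≠ 0 := fun h => hdx (by rw [h]; exact IsSquare.zero)
    have hr0 : disc ![1, 0, -l] ≠ 0 := fun h => hd' (by rw [h]; exact IsSquare.zero)
    have hx : x ≠ 0 := by rintro rfl; simp [disc] at hdx0
    obtain ⟨e, he⟩ := isSquare_mul_of_not_isSquare hdx hd'
    have he0 : e ≠ 0 := by rintro rfl; simp [hdx0, hr0] at he
    refine inOrbitBQ_of_disc_eq_sq_mul h2 hr hx (s := e / disc ![1, 0, -l])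
      (div_ne_zero he0 hr0) ?_
    field_simp
    linear_combination he

def quadCharC (F : Type*) [Field F] [Fintype F] : MulChar F ℂ :=
  (quadraticChar F).ringHomComp (Int.castRingHom ℂ)

local notation "χ" => quadCharC F

lemma quadCharC_apply (a : F) : χ a = (quadraticChar F a : ℂ) := rfl

lemma quadCharC_isQuadratic : (χ).IsQuadratic := (quadraticChar_isQuadratic F).comp _

lemma quadCharC_ne_one (hF2 : ringChar F ≠ 2) : χ ≠ 1 :=
  (MulChar.ringHomComp_ne_one_iff (Int.cast_injective (α := ℂ))).mpr (quadraticChar_ne_one hF2)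

lemma quadCharC_sq_mul {s : F} (hs : s ≠ 0) (a : F) : χ (s ^ 2 * a) = χ a := by
  rw [_root_.map_mul, quadCharC_apply, quadraticChar_sq_one' hs]
  simp

lemma quadCharC_of_not_isSquare {a : F} (ha : ¬IsSquare a) : χ a = -1 := by
  simp [quadCharC_apply, quadraticChar_neg_one_iff_not_isSquare.mpr ha]

lemma quadCharC_eq (a : F) : χ a = if a = 0 then 0 else if IsSquare a then 1 else -1 := by
  rw [quadCharC_apply, quadraticChar_apply, quadraticCharFun]
  split_ifs <;> simp

lemma sum_quadCharC (hF2 : ringChar F ≠ 2) : ∑ a, χ a = 0 :=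
  MulChar.sum_eq_zero_of_ne_one (quadCharC_ne_one hF2)

lemma sum_comp_sq (hF2 : ringChar F ≠ 2) (f : F → ℂ) :
    ∑ b, f (b ^ 2) = ∑ d, (1 + χ d) * f d := by
  rw [← Finset.sum_fiberwise_of_maps_to (g := fun b => b ^ 2) (t := Finset.univ)
    (fun _ _ => Finset.mem_univ _)]
  refine Finset.sum_congr rfl fun d _ => ?_
  rw [Finset.sum_congr rfl fun b hb => by rw [(Finset.mem_filter.mp hb).2], Finset.sum_const,
    nsmul_eq_mul, quadCharC_apply, add_comm (1 : ℂ)]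
  have h := quadraticChar_card_sqrts hF2 d
  rw [Set.toFinset_ofPred] at h
  congr 1
  exact_mod_cast h

lemma sum_quadCharC_mul_mulShift (hF2 : ringChar F ≠ 2) (ψ : AddChar F ℂ) (a : F) :
    ∑ s, χ s * ψ (s * a) = χ a * gaussSum χ ψ := by
  rcases eq_or_ne a 0 with rfl | ha
  · simp [sum_quadCharC hF2, MulChar.map_zero]
  · have h := gaussSum_mulShift_eq χ ψ (Units.mk0 a ha)
    rw [quadCharC_isQuadratic.inv, Units.val_mk0] at h
    simpa [gaussSum, AddChar.mulShift_apply, mul_comm a] using h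

lemma sum_quadCharC_sq_sub (hF2 : ringChar F ≠ 2) (d : F) :
    ∑ b, χ (b ^ 2 - d) = if d = 0 then qC - 1 else -1 := by
  split_ifs with hd
  · subst hd
    calc ∑ b, χ (b ^ 2 - 0) = ∑ b : F, (1 - if b = 0 then 1 else 0) :=
          Finset.sum_congr rfl fun b _ => by
            rcases eq_or_ne b 0 with rfl | hb
            · simp [MulChar.map_zero]
            · simpa [hb] using quadCharC_sq_mul hb 1
      _ = qC - 1 := by simp [Finset.sum_sub_distrib]
  rw [sum_comp_sq hF2 (fun e => χ (e - d))]
  simp only [add_mul, one_mul, Finset.sum_add_distrib]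
  have hshift : ∑ e, χ (e - d) = 0 :=
    (Fintype.sum_equiv (Equiv.subRight d) _ _ fun _ => rfl).trans (sum_quadCharC hF2)
  have hJ := jacobiSum_nontrivial_inv (quadCharC_ne_one hF2)
  rw [quadCharC_isQuadratic.inv, jacobiSum] at hJ
  -- `e = d v` turns the sum into `χ (-1)` times the Jacobi sum `J(χ, χ)`
  have hjac : ∑ e, χ e * χ (e - d) = χ (-1) * ∑ v, χ v * χ (1 - v) := by
    rw [← Fintype.sum_equiv (Equiv.mulLeft₀ d hd) (fun v => χ (d * v) * χ (d * v - d)) _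
      (fun _ => rfl), Finset.mul_sum]
    refine Finset.sum_congr rfl fun v _ => ?_
    rw [← _root_.map_mul, ← _root_.map_mul, ← _root_.map_mul,
      ← quadCharC_sq_mul hd (-1 * (v * (1 - v)))]
    ring_nf
  have hχ1 : χ (-1) * χ (-1) = 1 := by
    rw [← _root_.map_mul, neg_one_mul, neg_neg, map_one]
  rw [hshift, hjac, hJ, zero_add, mul_neg, hχ1]

lemma sum_sum_ite_mul_eq_zero {R : Type*} [CommRing R] (f g : F → R) :
    ∑ s, ∑ t, (if s * t = 0 then f s * g t else 0)
      = f 0 * ∑ t, g t + (∑ s, f s) * g 0 - f 0 * g 0 := by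
  have h : ∀ s, ∑ t, (if s * t = 0 then f s * g t else 0)
      = (if s = 0 then f 0 * ∑ t, g t - f 0 * g 0 else 0) + f s * g 0 := by
    intro s
    rcases eq_or_ne s 0 with rfl | hs
    · simp [Finset.mul_sum]
    · simp [hs]
  simp only [h, Finset.sum_add_distrib, Finset.sum_ite_eq', Finset.mem_univ, if_true,
    Finset.sum_mul]
  ring

lemma sum_fin_three {M : Type*} [AddCommMonoid M] {α : Type*} [Fintype α]
    (f : (Fin 3 → α) → M) : ∑ x, f x = ∑ a, ∑ c, ∑ b, f ![a, b, c] := by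
  let e : α × α × α ≃ (Fin 3 → α) :=
    { toFun := fun y => ![y.1, y.2.2, y.2.1]
      invFun := fun x => (x 0, x 2, x 1)
      left_inv := fun y => rfl
      right_inv := fun x => by funext i; fin_cases i <;> rfl }
  rw [← e.sum_comp, Fintype.sum_prod_type]
  simp only [Fintype.sum_prod_type]
  rfl

lemma sum_mulShift_eq {ψ : AddChar F ℂ} (hψ : ψ.IsPrimitive) (a : F) :
    ∑ s, ψ (s * a) = if a = 0 then qC else 0 := by
  rw [AddChar.sum_mulShift a hψ]
  split_ifs <;> simp

def quadCharDisc : (Fin 3 → F) → ℂ := fun x => χ (disc x)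

lemma isInvariant_quadCharDisc : IsInvariant (quadCharDisc (F := F)) := fun t ht g hg x => by
  simp only [quadCharDisc, disc_act, quadCharC_sq_mul (mul_ne_zero ht hg)]

lemma orbitIndicator_uv (h2 : (2 : F) ≠ 0) :
    orbitIndicator (![0, 1, 0] : Fin 3 → F)
      = (2 : ℂ)⁻¹ • (1 - indDiscZero + quadCharDisc) := by
  funext x
  simp only [orbitIndicator, inOrbitBQ_uv_iff h2, indDiscZero, quadCharDisc, quadCharC_eq,
    Pi.smul_apply, Pi.add_apply, Pi.sub_apply, Pi.one_apply, smul_eq_mul]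
  split_ifs <;> norm_num [*] at *

lemma orbitIndicator_nonsplit (h2 : (2 : F) ≠ 0) {l : F} (hl : ¬IsSquare l) :
    orbitIndicator ![1, 0, -l]
      = (2 : ℂ)⁻¹ • (1 - indDiscZero - quadCharDisc) := by
  funext x
  simp only [orbitIndicator, inOrbitBQ_nonsplit_iff h2 hl, indDiscZero, quadCharDisc, quadCharC_eq,
    Pi.smul_apply, Pi.sub_apply, Pi.one_apply, smul_eq_mul]
  split_ifs <;> norm_num [*] at *

lemma sum_indDiscZero (hF2 : ringChar F ≠ 2) (s t : F) :
    ∑ b, indDiscZero ![s, b, t] = 1 + χ s * χ t := by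
  have h := sum_comp_sq hF2 (fun e => if e = 4 * (s * t) then (1 : ℂ) else 0)
  simp only [mul_ite, mul_one, mul_zero, Finset.sum_ite_eq', Finset.mem_univ, if_true] at h
  have hb : ∀ b, indDiscZero ![s, b, t] = if b ^ 2 = 4 * (s * t) then 1 else 0 := by
    simp [indDiscZero, disc, sub_eq_zero]
  rw [Finset.sum_congr rfl fun b _ => hb b, h, ← _root_.map_mul,
    show (4 : F) * (s * t) = 2 ^ 2 * (s * t) by norm_num,
    quadCharC_sq_mul (Ring.two_ne_zero hF2)]

lemma sum_quadCharDisc (hF2 : ringChar F ≠ 2) (s t : F) :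
    ∑ b, quadCharDisc ![s, b, t] = qC * (if s * t = 0 then 1 else 0) - 1 := by
  simp only [quadCharDisc, disc, Matrix.cons_val_zero, Matrix.cons_val_one, Matrix.cons_val_two,
    Matrix.head_cons, Matrix.tail_cons]
  rw [sum_quadCharC_sq_sub hF2]
  have h4 : (4 : F) ≠ 0 := by
    simpa [show (4 : F) = 2 ^ 2 by norm_num] using Ring.two_ne_zero hF2
  simp only [mul_eq_zero, h4, false_or]
  split_ifs <;> ring

section Fourier

variable (ψ : AddChar F ℂ)

def fourierSum (w : Fin 3 → F) : ((Fin 3 → F) → ℂ) →ₗ[ℂ] ℂ where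
  toFun Φ := ∑ x, Φ x * ψ (bformBQ x w)
  map_add' Φ Φ' := by simp only [Pi.add_apply, add_mul, Finset.sum_add_distrib]
  map_smul' c Φ := by
    simp only [Pi.smul_apply, smul_eq_mul, mul_assoc, Finset.mul_sum, RingHom.id_apply]

lemma fourierSum_apply (w : Fin 3 → F) (Φ : (Fin 3 → F) → ℂ) :
    fourierSum ψ w Φ = ∑ x, Φ x * ψ (bformBQ x w) := rfl

lemma fourierSum_act (h2 : (2 : F) ≠ 0) {Φ : (Fin 3 → F) → ℂ} (hΦ : IsInvariant Φ) {t : F}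
    (ht : t ≠ 0) {g : Matrix (Fin 2) (Fin 2) F} (hg : g.det ≠ 0) (w : Fin 3 → F) :
    fourierSum ψ (act t g w) Φ = fourierSum ψ w Φ := by
  have hgT : gᵀ.det ≠ 0 := by rwa [Matrix.det_transpose]
  simp only [fourierSum_apply, bformBQ_act h2]
  rw [← (act_bijective ht hgT).sum_comp (fun y => Φ y * ψ (bformBQ y w))]
  exact Finset.sum_congr rfl fun x _ => by rw [hΦ ht hgT]

lemma fourierSum_uv (h2 : (2 : F) ≠ 0) {Φ : (Fin 3 → F) → ℂ} (hΦ : IsInvariant Φ) :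
    fourierSum ψ ![0, 1, 0] Φ = fourierSum ψ ![1, 0, -1] Φ := by
  -- `uv = U² - V²` with `U = (u+v)/2`, `V = (u-v)/2`
  have huv : act (1 : F) !![2⁻¹, 2⁻¹; 2⁻¹, -2⁻¹] ![1, 0, -1] = ![0, 1, 0] := by
    funext i
    fin_cases i <;> simp [act]
    field_simp
    norm_num
  rw [← huv, fourierSum_act ψ h2 hΦ one_ne_zero]
  rw [Matrix.det_fin_two_of]
  ring_nf
  simpa using h2

lemma fourierSum_single_zero (w : Fin 3 → F) : fourierSum ψ w (Pi.single 0 1) = 1 := by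
  simp [fourierSum_apply, Pi.single_apply, bformBQ]

lemma fourierSum_mid_zero (a c : F) (Φ : (Fin 3 → F) → ℂ) :
    fourierSum ψ ![a, 0, c] Φ = ∑ s, ∑ t, ψ (s * a) * ψ (t * c) * ∑ b, Φ ![s, b, t] := by
  rw [fourierSum_apply, sum_fin_three]
  refine Finset.sum_congr rfl fun s _ => Finset.sum_congr rfl fun t _ => ?_
  rw [Finset.mul_sum]
  refine Finset.sum_congr rfl fun b _ => ?_
  simp [bformBQ, AddChar.map_add_eq_mul]
  ring

lemma fourierSum_one (hψ : ψ.IsPrimitive) (a c : F) :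
    fourierSum ψ ![a, 0, c] 1 = qC * (if a = 0 then qC else 0) * (if c = 0 then qC else 0) := by
  rw [fourierSum_mid_zero, ← sum_mulShift_eq hψ a, ← sum_mulShift_eq hψ c, mul_assoc,
    Finset.sum_mul_sum, Finset.mul_sum]
  simp only [Pi.one_apply, Finset.sum_const, Finset.card_univ, nsmul_eq_mul, mul_one,
    Finset.mul_sum]
  exact Finset.sum_congr rfl fun s _ => Finset.sum_congr rfl fun t _ => by ring

lemma fourierSum_indDiscZero (hF2 : ringChar F ≠ 2) (hψ : ψ.IsPrimitive) (a c : F) :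
    fourierSum ψ ![a, 0, c] indDiscZero
      = (if a = 0 then qC else 0) * (if c = 0 then qC else 0) + χ (-(a * c)) * qC := by
  calc fourierSum ψ ![a, 0, c] indDiscZero
      = (∑ s, ψ (s * a)) * (∑ t, ψ (t * c))
          + (∑ s, χ s * ψ (s * a)) * (∑ t, χ t * ψ (t * c)) := by
        simp only [fourierSum_mid_zero, sum_indDiscZero hF2, Finset.sum_mul_sum,
          ← Finset.sum_add_distrib]
        exact Finset.sum_congr rfl fun s _ => Finset.sum_congr rfl fun t _ => by ring
    _ = _ := by
        have hG := gaussSum_sq (quadCharC_ne_one hF2) quadCharC_isQuadratic hψ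
        rw [sum_mulShift_eq hψ, sum_mulShift_eq hψ, sum_quadCharC_mul_mulShift hF2,
          sum_quadCharC_mul_mulShift hF2, show -(a * c) = -1 * a * c by ring,
          _root_.map_mul, _root_.map_mul]
        linear_combination (χ a * χ c) * hG

lemma fourierSum_quadCharDisc (hF2 : ringChar F ≠ 2) (hψ : ψ.IsPrimitive) (a c : F) :
    fourierSum ψ ![a, 0, c] quadCharDisc
      = qC * ((if a = 0 then qC else 0) + (if c = 0 then qC else 0) - 1)
          - (if a = 0 then qC else 0) * (if c = 0 then qC else 0) := by
  calc fourierSum ψ ![a, 0, c] quadCharDisc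
      = qC * ∑ s, ∑ t, (if s * t = 0 then ψ (s * a) * ψ (t * c) else 0)
          - (∑ s, ψ (s * a)) * (∑ t, ψ (t * c)) := by
        rw [fourierSum_mid_zero, Finset.sum_mul_sum, Finset.mul_sum, ← Finset.sum_sub_distrib]
        refine Finset.sum_congr rfl fun s _ => ?_
        rw [Finset.mul_sum, ← Finset.sum_sub_distrib]
        refine Finset.sum_congr rfl fun t _ => ?_
        rw [sum_quadCharDisc hF2]
        split_ifs <;> ring
    _ = _ := by
        rw [sum_sum_ite_mul_eq_zero, sum_mulShift_eq hψ, sum_mulShift_eq hψ]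
        simp only [zero_mul, AddChar.map_zero_eq_one]
        ring

end Fourier

def psiChar (p : ℕ) [Fact p.Prime] (F : Type*) [Field F] [CharP F p] : AddChar F ℂ :=
  letI : Algebra (ZMod p) F := ZMod.algebra F p
  haveI : NeZero p := ⟨(Fact.out : p.Prime).ne_zero⟩
  (ZMod.stdAddChar (N := p)).compAddMonoidHom (Algebra.trace (ZMod p) F).toAddMonoidHom

section StandardCharacter

variable (p : ℕ) [Fact p.Prime] [CharP F p]

lemma psiF_eq_psiChar : psiF p F = psiChar p F := by
  funext t
  simp only [psiF, psiChar, AddChar.compAddMonoidHom_apply, LinearMap.toAddMonoidHom_coe]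
  rw [ZMod.stdAddChar_apply, ZMod.toCircle_apply]

lemma psiChar_isPrimitive : (psiChar p F).IsPrimitive := by
  refine AddChar.IsPrimitive.of_ne_one ?_
  obtain rfl : ringChar F = p := ringChar.eq F p
  let : Algebra (ZMod (ringChar F)) F := ZMod.algebra F (ringChar F)
  have : NeZero (ringChar F) := ⟨(Fact.out : (ringChar F).Prime).ne_zero⟩
  obtain ⟨a, ha⟩ := FiniteField.trace_to_zmod_nondegenerate F (one_ne_zero (α := F))
  rw [one_mul] at ha
  exact AddChar.ne_one_iff.mpr ⟨a, fun h =>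
    ha (((ZMod.isPrimitive_stdAddChar _).zmod_char_eq_one_iff _ _).mp h)⟩

lemma card_pow_mul_FTBQ (Φ : (Fin 3 → F) → ℂ) (y : Fin 3 → F) :
    (Fintype.card F : ℂ) ^ 3 * FTBQ p Φ y = fourierSum (psiChar p F) y Φ := by
  rw [FTBQ, ← mul_assoc, mul_inv_cancel₀ (by simp), one_mul, psiF_eq_psiChar, fourierSum_apply]

end StandardCharacter

end BinQuad

open BinQuad

/-- the Fourier transform matrix for binary quadratic forms, `p ≠ 2`. -/
theorem stmt11 (p : ℕ) [Fact p.Prime] [CharP F p] (hp : p ≠ 2) (l : F) (hl : ¬ IsSquare l) :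
    let r : Fin 4 → Fin 3 → F := ![![0,0,0], ![0,0,1], ![0,1,0], ![1,0,-l]]
    let q : ℚ := (Fintype.card F : ℚ)
    let M : Matrix (Fin 4) (Fin 4) ℚ :=
      !![1, q^2-1, q*(q^2-1)/2, q*(q-1)^2/2;
         1, -1, (q^2-q)/2, -((q^2-q)/2);
         1, q-1, -q, 0;
         1, -(q+1), 0, q]
    ∀ (i j : Fin 4) (y : Fin 3 → F), InOrbitBQ (r i) y →
      (Fintype.card F : ℂ) ^ 3 * FTBQ p (fun x => if InOrbitBQ (r j) x then 1 else 0) y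
        = (M i j : ℂ) := by
  intro r q M i j y hy
  have hF2 : ringChar F ≠ 2 := by rwa [ringChar.eq F p]
  have h2 := Ring.two_ne_zero hF2
  have hψ := psiChar_isPrimitive (F := F) p
  obtain ⟨t, ht, g, hg, rfl⟩ := (inOrbitBQ_iff _ _).mp hy
  change _ * FTBQ p (orbitIndicator (r j)) _ = _
  rw [card_pow_mul_FTBQ, fourierSum_act _ h2 (isInvariant_orbitIndicator _) ht hg]
  have hl0 : l ≠ 0 := by rintro rfl; exact hl IsSquare.zero
  fin_cases i <;> fin_cases j <;>
    simp [r, M, q, orbitIndicator_zero, orbitIndicator_vSq h2, orbitIndicator_uv h2,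
      orbitIndicator_nonsplit h2 hl, fourierSum_uv _ h2 isInvariant_one,
      fourierSum_uv _ h2 isInvariant_indDiscZero, fourierSum_uv _ h2 isInvariant_quadCharDisc,
      fourierSum_single_zero, fourierSum_one _ hψ, fourierSum_indDiscZero _ hF2 hψ,
      fourierSum_quadCharDisc _ hF2 hψ, hl0, quadCharC_of_not_isSquare hl, MulChar.map_zero] <;> ring
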